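/- (Identity of h.) Let (a_1,…,a_n) be a generalized arithmetic sequence with n ≥ 7, and let m with 4 ≤ m ≤ n−3 be such that a_m > a_{m−1} and a_m > a_{m+1}. Then h(a_1,…,a_{m−1},a_{m+1},…,a_n) = h(a_1,…,a_n), i.e. deleting the local maximum a_m does not change the value of h. -/

import Mathlib

/-- A generalized arithmetic sequence `(a 1, …, a n)` of positive reals:
each interior term divides the sum of its two neighbors. -/
def IsGAS (n : ℕ) (a : ℕ → ℝ) : Prop :=
  (∀ i, 1 ≤ i → i ≤ n → 0 < a i) ∧
  (∀ i, 2 ≤ i → i + 1 ≤ n → ∃ c : ℕ+, a (i - 1) + a (i + 1) = (c : ℝ) * a i)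

/-- `h` of a sequence `(a 1, …, a n)` (meaningful for `n ≥ 4`). -/
noncomputable def hFun (n : ℕ) (a : ℕ → ℝ) : ℝ :=
  ∑ i ∈ Finset.Icc 2 (n - 2),
    (((a i + a (i + 2)) / a (i + 1) + (a (i - 1) + a (i + 1)) / a i) / 2 - 3)

/-! Write `r i = (a (i - 1) + a (i + 1)) / a i`, so that the `i`-th summand of `h` is
`(r i + r (i + 1)) / 2 - 3`. At a local maximum the multiplier `r m` is a positive integer
below `2`, hence `a m = a (m - 1) + a (m + 1)` and `r m = 1`. Deleting `a m` removes the
ratio `r m = 1` and lowers both neighbouring ratios by exactly `1`. Since `4 ≤ m ≤ n - 3`,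
none of these three is one of the half-weighted end ratios `r 2`, `r (n - 1)`, so the total
loss `3` is offset by the one fewer `- 3` in the shorter sum. -/

open Finset

section SumShift

variable {M : Type*} [AddCommMonoid M]

theorem Finset.sum_Ioc_add' {α : Type*} [AddCommMonoid α] [PartialOrder α]
    [IsOrderedCancelAddMonoid α] [ExistsAddOfLE α] [LocallyFiniteOrder α]
    (f : α → M) (a b c : α) : ∑ x ∈ Ioc a b, f (x + c) = ∑ x ∈ Ioc (a + c) (b + c), f x := by
  rw [← map_add_right_Ioc, sum_map]
  rfl

theorem Finset.sum_Ioc_eq_sum_Ioc_succ_of_window {f g : ℕ → M} {a p q N : ℕ}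
    (hap : a ≤ p) (hpq : p ≤ q) (hqN : q ≤ N)
    (head : ∀ i ∈ Ioc a p, f i = g i)
    (window : ∑ i ∈ Ioc p q, f i = ∑ i ∈ Ioc p (q + 1), g i)
    (tail : ∀ i ∈ Ioc q N, f i = g (i + 1)) :
    ∑ i ∈ Ioc a N, f i = ∑ i ∈ Ioc a (N + 1), g i := by
  rw [← sum_Ioc_consecutive f hap (hpq.trans hqN), ← sum_Ioc_consecutive f hpq hqN,
    ← sum_Ioc_consecutive g hap (by omega : p ≤ N + 1),
    ← sum_Ioc_consecutive g (by omega : p ≤ q + 1) (by omega : q + 1 ≤ N + 1),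
    sum_congr rfl head, window, sum_congr rfl tail, sum_Ioc_add']

end SumShift

def deleteAt {α : Type*} (a : ℕ → α) (m : ℕ) : ℕ → α :=
  fun i => if i < m then a i else a (i + 1)

section DeleteAt

variable {α : Type*} {a : ℕ → α} {m i : ℕ}

theorem deleteAt_of_lt (h : i < m) : deleteAt a m i = a i := if_pos h

theorem deleteAt_of_le (h : m ≤ i) : deleteAt a m i = a (i + 1) := if_neg (by omega)

end DeleteAt

noncomputable def gasRatio (a : ℕ → ℝ) (i : ℕ) : ℝ := (a (i - 1) + a (i + 1)) / a i

noncomputable def hTerm (a : ℕ → ℝ) (i : ℕ) : ℝ := (gasRatio a (i + 1) + gasRatio a i) / 2 - 3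

theorem hFun_eq_sum_hTerm (n : ℕ) (a : ℕ → ℝ) :
    hFun n a = ∑ i ∈ Ioc 1 (n - 2), hTerm a i := by
  rw [hFun, ← Icc_add_one_left_eq_Ioc]
  rfl

section Deletion

variable {a : ℕ → ℝ} {m i : ℕ}

theorem gasRatio_eq_one (hkey : a (m - 1) + a (m + 1) = a m) (hm : a m ≠ 0) :
    gasRatio a m = 1 := by
  rw [gasRatio, hkey, div_self hm]

theorem gasRatio_deleteAt_of_lt (h : i + 1 < m) :
    gasRatio (deleteAt a m) i = gasRatio a i := by
  simp only [gasRatio, deleteAt_of_lt (by omega : i - 1 < m), deleteAt_of_lt (by omega : i < m),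
    deleteAt_of_lt h]

theorem gasRatio_deleteAt_of_gt (h : m < i) :
    gasRatio (deleteAt a m) i = gasRatio a (i + 1) := by
  simp only [gasRatio, deleteAt_of_le (by omega : m ≤ i - 1), deleteAt_of_le h.le,
    deleteAt_of_le (by omega : m ≤ i + 1), Nat.sub_add_cancel (by omega : 1 ≤ i),
    Nat.add_sub_cancel]

theorem gasRatio_deleteAt_pred (hm : 0 < m) (hkey : a (m - 1) + a (m + 1) = a m)
    (ha : a (m - 1) ≠ 0) :
    gasRatio (deleteAt a m) (m - 1) = gasRatio a (m - 1) - 1 := by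
  simp only [gasRatio, deleteAt_of_lt (by omega : m - 1 - 1 < m),
    deleteAt_of_lt (by omega : m - 1 < m), Nat.sub_add_cancel hm, deleteAt_of_le le_rfl]
  rw [← hkey]
  field_simp
  ring

theorem gasRatio_deleteAt_self (hm : 0 < m) (hkey : a (m - 1) + a (m + 1) = a m)
    (ha : a (m + 1) ≠ 0) :
    gasRatio (deleteAt a m) m = gasRatio a (m + 1) - 1 := by
  simp only [gasRatio, deleteAt_of_lt (by omega : m - 1 < m), deleteAt_of_le le_rfl,
    deleteAt_of_le (by omega : m ≤ m + 1), Nat.add_sub_cancel]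
  rw [← hkey]
  field_simp
  ring

theorem hTerm_deleteAt_of_lt (h : i + 2 < m) : hTerm (deleteAt a m) i = hTerm a i := by
  simp only [hTerm, gasRatio_deleteAt_of_lt (by omega : i + 1 + 1 < m),
    gasRatio_deleteAt_of_lt (by omega : i + 1 < m)]

theorem hTerm_deleteAt_of_gt (h : m < i) : hTerm (deleteAt a m) i = hTerm a (i + 1) := by
  simp only [hTerm, gasRatio_deleteAt_of_gt h, gasRatio_deleteAt_of_gt (by omega : m < i + 1)]

theorem sum_hTerm_deleteAt_window (hm : 3 ≤ m) (hkey : a (m - 1) + a (m + 1) = a m)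
    (h₁ : a (m - 1) ≠ 0) (h₂ : a m ≠ 0) (h₃ : a (m + 1) ≠ 0) :
    ∑ i ∈ Ioc (m - 3) m, hTerm (deleteAt a m) i = ∑ i ∈ Ioc (m - 3) (m + 1), hTerm a i := by
  obtain ⟨p, rfl⟩ : ∃ p, m = p + 3 := ⟨m - 3, by omega⟩
  have r₁ := gasRatio_deleteAt_of_lt (a := a) (by omega : p + 1 + 1 < p + 3)
  have r₂ := gasRatio_deleteAt_pred (by omega) hkey h₁
  have r₃ := gasRatio_deleteAt_self (by omega) hkey h₃
  have r₄ := gasRatio_deleteAt_of_gt (a := a) (by omega : p + 3 < p + 4)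
  have r₅ := gasRatio_eq_one hkey h₂
  simp (disch := omega) only [sum_Ioc_succ_top, Ioc_self, sum_empty, zero_add, hTerm, add_assoc,
    Nat.reduceAdd, Nat.add_sub_cancel, Nat.add_one_sub_one] at *
  linarith

end Deletion

theorem IsGAS.add_neighbors_eq_of_local_max {n : ℕ} {a : ℕ → ℝ} (hgas : IsGAS n a) {m : ℕ}
    (hm₁ : 2 ≤ m) (hm₂ : m + 1 ≤ n) (hl : a (m - 1) < a m) (hr : a (m + 1) < a m) :
    a (m - 1) + a (m + 1) = a m := by
  obtain ⟨c, hc⟩ := hgas.2 m hm₁ hm₂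
  have hpos : 0 < a m := hgas.1 m (by omega) (by omega)
  have hc_lt : ((c : ℕ) : ℝ) < 2 := by nlinarith
  have hc_one : (c : ℕ) = 1 := by
    have : (c : ℕ) < 2 := by exact_mod_cast hc_lt
    have := c.pos
    omega
  rwa [hc_one, Nat.cast_one, one_mul] at hc

theorem h_identity_general (n : ℕ) (a : ℕ → ℝ) (hgas : IsGAS n a)
    (m : ℕ) (hm1 : 4 ≤ m) (hm2 : m ≤ n - 3)
    (hmax₁ : a (m - 1) < a m) (hmax₂ : a (m + 1) < a m) :
    hFun (n - 1) (fun i => if i < m then a i else a (i + 1)) = hFun n a := by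
  have hkey := hgas.add_neighbors_eq_of_local_max (by omega) (by omega) hmax₁ hmax₂
  have hne : ∀ i, 1 ≤ i → i ≤ n → a i ≠ 0 := fun i h₁ h₂ => (hgas.1 i h₁ h₂).ne'
  change hFun (n - 1) (deleteAt a m) = hFun n a
  rw [hFun_eq_sum_hTerm, hFun_eq_sum_hTerm, show n - 1 - 2 = n - 3 by omega,
    show n - 2 = n - 3 + 1 by omega]
  exact sum_Ioc_eq_sum_Ioc_succ_of_window (p := m - 3) (q := m) (by omega) (by omega) hm2
    (fun i hi => hTerm_deleteAt_of_lt (by rw [mem_Ioc] at hi; omega))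
    (sum_hTerm_deleteAt_window (by omega) hkey (hne _ (by omega) (by omega))
      (hne _ (by omega) (by omega)) (hne _ (by omega) (by omega)))
    (fun i hi => hTerm_deleteAt_of_gt (by rw [mem_Ioc] at hi; omega))

/-- Identity of `h`: deleting a local maximum `a m` with `4 ≤ m ≤ n − 3` from a
generalized arithmetic sequence of length `n ≥ 7` does not change the value of `h`. -/
theorem h_identity (n : ℕ) (hn : 7 ≤ n) (a : ℕ → ℝ) (hgas : IsGAS n a)
    (m : ℕ) (hm1 : 4 ≤ m) (hm2 : m ≤ n - 3)
    (hmax₁ : a (m - 1) < a m) (hmax₂ : a (m + 1) < a m) :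
    hFun (n - 1) (fun i => if i < m then a i else a (i + 1)) = hFun n a :=
  h_identity_general n a hgas m hm1 hm2 hmax₁ hmax₂
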